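/- Let η∈ℝ, let β(−η)=√(1−iη) (principal branch of the complex square root), and let φ(x)=2·sech²(x). Define k:ℝ→ℂ by k(x)=d/dx(e^{β(−η)x}·sech x). Then k satisfies the fourth-order ODE k''''(x)−4k''(x)+6·d/dx(φ(x)k'(x))−3η²k(x)=−4iηβ(−η)·k'(x) for all x∈ℝ. (Equivalently, g*(x,η)=k(x) is an eigenfunction of the adjoint linearized KP-II operator L(η)*=∂_x³−4∂_x−3η²∂_x^{-1}+6φ∂_x with eigenvalue λ(−η)=−4iηβ(−η).) -/

import Mathlib

open MeasureTheory Filter Complex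
open scoped ENNReal Topology

noncomputable section

/-- partial derivative in the first variable -/
def pdX (f : ℝ → ℝ → ℝ) (x y : ℝ) : ℝ := deriv (fun x' => f x' y) x

/-- partial derivative in the second variable -/
def pdY (f : ℝ → ℝ → ℝ) (x y : ℝ) : ℝ := deriv (fun y' => f x y') y

/-- the L² norm on ℝ² -/
def L2n (f : ℝ → ℝ → ℝ) : ℝ≥0∞ := eLpNorm (fun p : ℝ × ℝ => f p.1 p.2) 2 volume

/-- the KP-II line soliton profile φ_c(x) = c sech²(√(c/2) x) -/
def soliton (c x : ℝ) : ℝ := c * ((Real.cosh (Real.sqrt (c/2) * x))⁻¹) ^ 2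

def Smooth2 (f : ℝ → ℝ → ℝ) : Prop := ContDiff ℝ (⊤ : ℕ∞) fun p : ℝ × ℝ => f p.1 p.2

def Smooth3 (u : ℝ → ℝ → ℝ → ℝ) : Prop :=
  ContDiff ℝ (⊤ : ℕ∞) fun p : ℝ × ℝ × ℝ => u p.1 p.2.1 p.2.2

/-- decay faster than any polynomial -/
def RapidDecay2 (f : ℝ → ℝ → ℝ) : Prop :=
  ∀ n : ℕ, ∃ C : ℝ, ∀ x y : ℝ, (1 + x ^ 2 + y ^ 2) ^ n * |f x y| ≤ C

def RapidDecay3 (u : ℝ → ℝ → ℝ → ℝ) : Prop := ∀ t : ℝ, RapidDecay2 (u t)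

/-- exponential decay of every order -/
def ExpDecay2 (f : ℝ → ℝ → ℝ) : Prop :=
  ∀ n : ℕ, ∃ C : ℝ, ∀ x y : ℝ, |f x y| ≤ C * Real.exp (-(n : ℝ) * (|x| + |y|))

/-- u solves the KP-II equation ∂_x(∂_t u+∂_x³u+3∂_x(u²))+3∂_y²u=0 for t>0 -/
def IsKPII (u : ℝ → ℝ → ℝ → ℝ) : Prop :=
  ∀ t x y : ℝ, 0 < t →
    pdX (fun a b => deriv (fun t' => u t' a b) t
        + pdX (pdX (pdX (u t))) a b
        + 3 * pdX (fun a' b' => (u t a' b') ^ 2) a b) x y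
      + 3 * pdY (pdY (u t)) x y = 0

/-- u solves KP-II on the time interval (0,T] -/
def IsKPIIOn (T : ℝ) (u : ℝ → ℝ → ℝ → ℝ) : Prop :=
  ∀ t x y : ℝ, 0 < t → t ≤ T →
    pdX (fun a b => deriv (fun t' => u t' a b) t
        + pdX (pdX (pdX (u t))) a b
        + 3 * pdX (fun a' b' => (u t a' b') ^ 2) a b) x y
      + 3 * pdY (pdY (u t)) x y = 0

/-- w solves the free linearized KP-II equation in the moving frame:
∂_x(∂_t w+∂_x³w−4∂_x w)+3∂_y²w=0 -/
def IsFreeLin (w : ℝ → ℝ → ℝ → ℝ) : Prop :=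
  ∀ t x y : ℝ, 0 < t →
    pdX (fun a b => deriv (fun t' => w t' a b) t
        + pdX (pdX (pdX (w t))) a b - 4 * pdX (w t) a b) x y
      + 3 * pdY (pdY (w t)) x y = 0

/-- u solves the KP-II equation linearized around the line soliton φ = soliton 2:
∂_x(∂_t u+∂_x³u−4∂_x u+6∂_x(φu))+3∂_y²u=0 -/
def IsLinSol (u : ℝ → ℝ → ℝ → ℝ) : Prop :=
  ∀ t x y : ℝ, 0 < t →
    pdX (fun a b => deriv (fun t' => u t' a b) t
        + pdX (pdX (pdX (u t))) a b - 4 * pdX (u t) a b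
        + 6 * pdX (fun a' b' => soliton 2 a' * u t a' b') a b) x y
      + 3 * pdY (pdY (u t)) x y = 0

/-- Fourier transform on ℝ² -/
def FT2 (f : ℝ → ℝ → ℝ) (ξ η : ℝ) : ℂ :=
  ∫ p : ℝ × ℝ, Complex.exp (-Complex.I * ((p.1 * ξ + p.2 * η : ℝ) : ℂ)) * ((f p.1 p.2 : ℝ) : ℂ)

/-- the norm ‖ |D_x|^a |D_y|^b f ‖_{L²(ℝ²)} computed on the Fourier side -/
def fwNorm (a b : ℝ) (f : ℝ → ℝ → ℝ) : ℝ≥0∞ :=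
  (∫⁻ q : ℝ × ℝ,
      ENNReal.ofReal (|q.1| ^ (2*a) * |q.2| ^ (2*b) * ‖FT2 f q.1 q.2‖ ^ 2)) ^ (1/2 : ℝ)

/-- the Sobolev H^s(ℝ²) norm computed on the Fourier side -/
def sobNorm (s : ℝ) (f : ℝ → ℝ → ℝ) : ℝ≥0∞ :=
  (∫⁻ q : ℝ × ℝ,
      ENNReal.ofReal ((1 + q.1 ^ 2 + q.2 ^ 2) ^ s * ‖FT2 f q.1 q.2‖ ^ 2)) ^ (1/2 : ℝ)

/-- the Sobolev H^k(ℝ) norm of a smooth function of one variable -/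
def HkNormS (k : ℕ) (f : ℝ → ℝ) : ℝ≥0∞ :=
  ∑ j ∈ Finset.range (k+1), eLpNorm (iteratedDeriv j f) 2 volume

/-- the exponentially weighted norm ‖e^{αx} f‖_{L²(ℝ²)} -/
def XnormE (α : ℝ) (f : ℝ → ℝ → ℝ) : ℝ≥0∞ :=
  eLpNorm (fun p : ℝ × ℝ => Real.exp (α * p.1) * f p.1 p.2) 2 volume

/-- the mixed norm ‖e^{αx} f‖_{L¹_x L²_y} -/
def XL1L2 (α : ℝ) (f : ℝ → ℝ → ℝ) : ℝ≥0∞ :=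
  ∫⁻ x : ℝ, (∫⁻ y : ℝ, ENNReal.ofReal ((Real.exp (α * x) * f x y) ^ 2)) ^ (1/2 : ℝ)

/-- the Japanese bracket ⟨x⟩ = √(1+x²) -/
def japW (x : ℝ) : ℝ := Real.sqrt (1 + x ^ 2)

/-- the weight p_n(x) = e^{2αn}(1+tanh(α(x−n))) -/
def pfun (α : ℝ) (n : ℕ) (x : ℝ) : ℝ :=
  Real.exp (2 * α * (n : ℝ)) * (1 + Real.tanh (α * (x - (n : ℝ))))

/-- χ_{+,ε}(x) = 1 + tanh(εx) -/
def chiP (ε x : ℝ) : ℝ := 1 + Real.tanh (ε * x)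

/-- β(η) = √(1+iη), principal branch -/
def betap (η : ℝ) : ℂ := (1 + (η : ℂ) * Complex.I) ^ ((1 : ℂ)/2)

/-- β(−η) = √(1−iη), principal branch -/
def betam (η : ℝ) : ℂ := (1 - (η : ℂ) * Complex.I) ^ ((1 : ℂ)/2)

/-- the adjoint resonant eigenfunction g^*(x,η)=∂_x(e^{β(−η)x} sech x) -/
def gstar (x η : ℝ) : ℂ :=
  deriv (fun x' : ℝ => Complex.exp (betam η * (x' : ℂ)) * (Complex.cosh (x' : ℂ))⁻¹) x

/-- g₁^*(x,η) = Re g^*(x,η) -/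
def g1s (x η : ℝ) : ℝ := (gstar x η).re

/-- g₂^*(x,η) = −η⁻¹ Im g^*(x,η), extended continuously at η = 0 -/
def g2s (x η : ℝ) : ℝ :=
  if η = 0 then -deriv (fun η' : ℝ => (gstar x η').im) 0 else -η⁻¹ * (gstar x η).im

/-- the rescaled adjoint eigenfunctions g₁^*(z,η,c)=c g₁^*(√(c/2)z,η),
g₂^*(z,η,c)=(c/2) g₂^*(√(c/2)z,η) -/
def gsc (k : Fin 2) (z η c : ℝ) : ℝ :=
  if k = 0 then c * g1s (Real.sqrt (c/2) * z) η else (c/2) * g2s (Real.sqrt (c/2) * z) η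

/-- the resonant eigenfunction g(x,η)=(−i/(2ηβ(η)))∂_x²(e^{−β(η)x} sech x) -/
def gres (x η : ℝ) : ℂ :=
  (-Complex.I / (2 * (η : ℂ) * betap η)) *
    iteratedDeriv 2 (fun x' : ℝ => Complex.exp (-(betap η) * (x' : ℂ)) * (Complex.cosh (x' : ℂ))⁻¹) x

/-- g₁(x,η) = 2 Re g(x,η) -/
def g1fun (x η : ℝ) : ℝ := 2 * (gres x η).re

/-- g₂(x,η) = −2η Im g(x,η) -/
def g2fun (x η : ℝ) : ℝ := -2 * η * (gres x η).im

/-- partial Fourier transform in y (no normalization) -/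
def FyF (f : ℝ → ℝ → ℝ) (x η : ℝ) : ℂ :=
  ∫ y : ℝ, ((f x y : ℝ) : ℂ) * Complex.exp (-Complex.I * (y : ℂ) * (η : ℂ))

/-- the coefficients a_k(η) = ∫∫ f(x,y)e^{−iyη} conj(g_k^*(x,η)) dx dy -/
def acoef (f : ℝ → ℝ → ℝ) (k : Fin 2) (η : ℝ) : ℂ :=
  ∫ x : ℝ, FyF f x η * (starRingEnd ℂ) (((if k = 0 then g1s x η else g2s x η : ℝ) : ℂ))

/-- spectral projection P₀(η₀) onto the resonant modes -/
def P0r (η₀ : ℝ) (f : ℝ → ℝ → ℝ) (x y : ℝ) : ℝ :=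
  (1 / (2 * Real.pi)) *
    (∫ η in Set.Icc (-η₀) η₀,
      (acoef f 0 η * ((g1fun x η : ℝ) : ℂ) + acoef f 1 η * ((g2fun x η : ℝ) : ℂ))
        * Complex.exp (Complex.I * (y : ℂ) * (η : ℂ))).re

/-- Fourier cutoff P₁(0,M) to y-frequencies |η| ≤ M -/
def P1r (M : ℝ) (f : ℝ → ℝ → ℝ) (x y : ℝ) : ℝ :=
  (1 / (2 * Real.pi)) *
    (∫ η in Set.Icc (-M) M, FyF f x η * Complex.exp (Complex.I * (y : ℂ) * (η : ℂ))).re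

/-- P₂(η₀,M) = P₁(0,M) − P₀(η₀) -/
def P2r (η₀ M : ℝ) (f : ℝ → ℝ → ℝ) (x y : ℝ) : ℝ := P1r M f x y - P0r η₀ f x y

/-- membership in Y: an L² function of one variable whose Fourier transform is
supported in [−η₀,η₀] -/
def MemY (η₀ : ℝ) (f : ℝ → ℝ) : Prop :=
  ∃ g : ℝ → ℂ, Integrable g ∧ MemLp g 2 (volume : Measure ℝ) ∧
    (∀ η : ℝ, η ∉ Set.Icc (-η₀) η₀ → g η = 0) ∧
    ∀ x : ℝ, ((f x : ℝ) : ℂ) = ∫ η : ℝ, g η * Complex.exp (Complex.I * (x : ℂ) * (η : ℂ))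

/-- ψ_{c,L}(x) = 2(√(2c)−2)ψ(x+L) -/
def phiL (ψ : ℝ → ℝ) (c L x : ℝ) : ℝ := 2 * (Real.sqrt (2*c) - 2) * ψ (x + L)

/-- the truncated orthogonality functional F_k[ũ,c̃,γ,L] (cut off at |y| ≤ M) -/
def Ffun (ψ : ℝ → ℝ) (L : ℝ) (u : ℝ → ℝ → ℝ) (ct γ : ℝ → ℝ) (k : Fin 2) (M η : ℝ) : ℂ :=
  ∫ y in Set.Icc (-M) M,
    (∫ x : ℝ,
        (((u x y + soliton 2 x - soliton (2 + ct y) (x - γ y)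
            + phiL ψ (2 + ct y) L (x - γ y) : ℝ) : ℂ)
          * (starRingEnd ℂ) ((gsc k (x - γ y) η (2 + ct y) : ℝ) : ℂ)))
      * Complex.exp (-Complex.I * (y : ℂ) * (η : ℂ))

/-- F_k[ũ,c̃,γ,L] = 0 in L²(−η₀,η₀): the truncated functionals converge to 0
in L²(−η₀,η₀) as M → ∞ -/
def Fvanish (ψ : ℝ → ℝ) (η₀ L : ℝ) (u : ℝ → ℝ → ℝ) (ct γ : ℝ → ℝ) (k : Fin 2) : Prop :=
  Tendsto (fun M : ℝ => ∫ η in Set.Icc (-η₀) η₀, ‖Ffun ψ L u ct γ k M η‖ ^ 2)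
    atTop (𝓝 0)

/-- the exponentially weighted measure e^{2αx} dx dy on ℝ² -/
def muW (α : ℝ) : Measure (ℝ × ℝ) :=
  volume.withDensity fun p : ℝ × ℝ => ENNReal.ofReal (Real.exp (2 * α * p.1))

/-!
With `t = tanh x`, every derivative of `e^{bx} sech x` has the form `p(t) e^{bx} sech x` with `p`
a polynomial, and differentiation acts on `p` as `p ↦ (b - t) p + (1 - t²) p'`, because
`t' = 1 - t²` and `(e^{bx} sech x)' = (b - t) e^{bx} sech x`. As `φ = 2 sech² x = 2 (1 - t²)`,
the fourth-order equation becomes a polynomial identity in `t` and `b`. It holds for every `b`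
once `-3η²` and `-4iηβ` are written as `3 (b² - 1)²` and `4b (b² - 1)`, which is what
`β(-η)² = 1 - iη` allows.
-/

open Polynomial

def expSech (b : ℂ) (x : ℝ) : ℂ := Complex.exp (b * x) * (Complex.cosh x)⁻¹

def tanhDerivOp (b : ℂ) (p : ℂ[X]) : ℂ[X] := (C b - X) * p + (1 - X ^ 2) * derivative p

lemma Real.hasDerivAt_tanh (x : ℝ) : HasDerivAt Real.tanh (1 - Real.tanh x ^ 2) x := by
  have hc := (Real.cosh_pos x).ne'
  have h := (Real.hasDerivAt_sinh x).div (Real.hasDerivAt_cosh x) hc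
  have htanh : Real.tanh = fun y => Real.sinh y / Real.cosh y := funext Real.tanh_eq_sinh_div_cosh
  rw [htanh]
  refine h.congr_deriv ?_
  beta_reduce
  field_simp

lemma Real.inv_cosh_sq (x : ℝ) : (Real.cosh x)⁻¹ ^ 2 = 1 - Real.tanh x ^ 2 := by
  have hc := (Real.cosh_pos x).ne'
  rw [Real.tanh_eq_sinh_div_cosh]
  field_simp
  linear_combination (Real.cosh_sq_sub_sinh_sq x).symm

lemma Complex.cosh_ofReal_ne_zero (x : ℝ) : Complex.cosh x ≠ 0 := by
  rw [← Complex.ofReal_cosh]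
  exact_mod_cast (Real.cosh_pos x).ne'

lemma hasDerivAt_expSech (b : ℂ) (x : ℝ) :
    HasDerivAt (expSech b) ((b - Real.tanh x) * expSech b x) x := by
  have hlin : HasDerivAt (fun y : ℝ => b * (y : ℂ)) b x := by
    simpa using (hasDerivAt_id x).ofReal_comp.const_mul b
  have hc := Complex.cosh_ofReal_ne_zero x
  have hcosh := (Complex.hasDerivAt_cosh (x : ℂ)).comp_ofReal.inv hc
  refine (hlin.cexp.mul hcosh).congr_deriv ?_
  rw [expSech, Pi.inv_apply, Complex.ofReal_tanh, Complex.tanh_eq_sinh_div_cosh]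
  field_simp
  ring

lemma hasDerivAt_eval_tanh_mul_expSech (b : ℂ) (p : ℂ[X]) (x : ℝ) :
    HasDerivAt (fun y : ℝ => p.eval (Real.tanh y : ℂ) * expSech b y)
      ((tanhDerivOp b p).eval (Real.tanh x : ℂ) * expSech b x) x := by
  have hp := (p.hasDerivAt (Real.tanh x : ℂ)).comp x (Real.hasDerivAt_tanh x).ofReal_comp
  refine (hp.mul (hasDerivAt_expSech b x)).congr_deriv ?_
  simp only [Function.comp_apply, tanhDerivOp, eval_add, eval_mul, eval_sub, eval_C, eval_X,
    eval_one, eval_pow]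
  push_cast
  ring

lemma iteratedDeriv_eval_tanh_mul_expSech (b : ℂ) (p : ℂ[X]) (n : ℕ) :
    iteratedDeriv n (fun y : ℝ => p.eval (Real.tanh y : ℂ) * expSech b y)
      = fun y => ((tanhDerivOp b)^[n] p).eval (Real.tanh y : ℂ) * expSech b y := by
  induction n with
  | zero => rfl
  | succ n ih =>
    ext y
    rw [iteratedDeriv_succ, ih, Function.iterate_succ_apply']
    exact (hasDerivAt_eval_tanh_mul_expSech b _ y).deriv

lemma tanhDerivOp_resonance (b : ℂ) :
    (tanhDerivOp b)^[5] 1 - 4 * (tanhDerivOp b)^[3] 1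
      + 6 * tanhDerivOp b (2 * (1 - X ^ 2) * (tanhDerivOp b)^[2] 1)
      + 3 * (C b ^ 2 - 1) ^ 2 * (tanhDerivOp b)^[1] 1
      = 4 * C b * (C b ^ 2 - 1) * (tanhDerivOp b)^[2] 1 := by
  have h1 : tanhDerivOp b 1 = C b - X := by simp [tanhDerivOp]
  have h2 : tanhDerivOp b (C b - X) = 2 * X ^ 2 - 2 * C b * X + C b ^ 2 - 1 := by
    rw [tanhDerivOp, derivative_sub, derivative_C, derivative_X]
    ring
  have h3 : tanhDerivOp b (2 * X ^ 2 - 2 * C b * X + C b ^ 2 - 1)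
      = 6 * C b * X ^ 2 - 6 * X ^ 3 - 3 * C b ^ 2 * X + 5 * X + C b ^ 3 - 3 * C b := by
    simp only [tanhDerivOp, derivative_add, derivative_sub, derivative_mul, derivative_pow,
      derivative_X, derivative_C, derivative_ofNat, derivative_one, C_ofNat, Nat.cast_ofNat,
      Nat.add_one_sub_one]
    ring
  have h4 : tanhDerivOp b
        (6 * C b * X ^ 2 - 6 * X ^ 3 - 3 * C b ^ 2 * X + 5 * X + C b ^ 3 - 3 * C b)
      = 24 * X ^ 4 - 24 * C b * X ^ 3 + 12 * C b ^ 2 * X ^ 2 - 28 * X ^ 2 - 4 * C b ^ 3 * X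
        + 20 * C b * X + C b ^ 4 - 6 * C b ^ 2 + 5 := by
    simp only [tanhDerivOp, derivative_add, derivative_sub, derivative_mul, derivative_pow,
      derivative_X, derivative_C, derivative_ofNat, C_ofNat, Nat.cast_ofNat, Nat.add_one_sub_one]
    ring
  have h5 : tanhDerivOp b (24 * X ^ 4 - 24 * C b * X ^ 3 + 12 * C b ^ 2 * X ^ 2 - 28 * X ^ 2
        - 4 * C b ^ 3 * X + 20 * C b * X + C b ^ 4 - 6 * C b ^ 2 + 5)
      = -120 * X ^ 5 + 120 * C b * X ^ 4 - 60 * C b ^ 2 * X ^ 3 + 180 * X ^ 3 + 20 * C b ^ 3 * X ^ 2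
        - 140 * C b * X ^ 2 - 5 * C b ^ 4 * X + 50 * C b ^ 2 * X - 61 * X + C b ^ 5 - 10 * C b ^ 3
        + 25 * C b := by
    simp only [tanhDerivOp, derivative_add, derivative_sub, derivative_mul, derivative_pow,
      derivative_X, derivative_C, derivative_ofNat, C_ofNat, Nat.cast_ofNat, Nat.add_one_sub_one]
    ring
  have hφ : tanhDerivOp b (2 * (1 - X ^ 2) * (2 * X ^ 2 - 2 * C b * X + C b ^ 2 - 1))
      = 20 * X ^ 5 - 20 * C b * X ^ 4 + 10 * C b ^ 2 * X ^ 3 - 34 * X ^ 3 - 2 * C b ^ 3 * X ^ 2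
        + 26 * C b * X ^ 2 - 10 * C b ^ 2 * X + 14 * X + 2 * C b ^ 3 - 6 * C b := by
    simp only [tanhDerivOp, derivative_add, derivative_sub, derivative_mul, derivative_pow,
      derivative_X, derivative_C, derivative_ofNat, derivative_one, C_ofNat, Nat.cast_ofNat,
      Nat.add_one_sub_one]
    ring
  simp only [Function.iterate_succ_apply', Function.iterate_zero_apply, h1, h2, h3, h4, h5, hφ]
  ring

theorem deriv_expSech_ode (b : ℂ) (x : ℝ) :
    iteratedDeriv 4 (deriv (expSech b)) x - 4 * iteratedDeriv 2 (deriv (expSech b)) x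
      + 6 * deriv (fun y => ((2 * ((Real.cosh y)⁻¹) ^ 2 : ℝ) : ℂ) * deriv (deriv (expSech b)) y) x
      + 3 * (b ^ 2 - 1) ^ 2 * deriv (expSech b) x
      = 4 * b * (b ^ 2 - 1) * deriv (deriv (expSech b)) x := by
  have hderiv : ∀ n, iteratedDeriv n (deriv (expSech b))
      = fun y => ((tanhDerivOp b)^[n + 1] 1).eval (Real.tanh y : ℂ) * expSech b y := by
    intro n
    rw [← iteratedDeriv_succ', ← iteratedDeriv_eval_tanh_mul_expSech]
    simp only [eval_one, one_mul]
  have hk := hderiv 0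
  have hk' := hderiv 1
  rw [iteratedDeriv_zero] at hk
  rw [iteratedDeriv_one] at hk'
  have hφ : (fun y => ((2 * ((Real.cosh y)⁻¹) ^ 2 : ℝ) : ℂ) * deriv (deriv (expSech b)) y)
      = fun y => (2 * (1 - X ^ 2) * (tanhDerivOp b)^[2] 1).eval (Real.tanh y : ℂ) * expSech b y := by
    ext y
    rw [hk', Real.inv_cosh_sq]
    simp only [Function.iterate_succ_apply', Function.iterate_zero_apply, eval_mul, eval_sub,
      eval_pow, eval_X, eval_one, eval_ofNat]
    push_cast
    ring
  rw [hderiv, hderiv, hφ, hk', hk, (hasDerivAt_eval_tanh_mul_expSech b _ x).deriv]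
  have h := congrArg (fun p => p.eval (Real.tanh x : ℂ) * expSech b x) (tanhDerivOp_resonance b)
  simp only [eval_add, eval_sub, eval_mul, eval_pow, eval_C, eval_ofNat, eval_one] at h
  linear_combination h

lemma betam_sq (η : ℝ) : betam η ^ 2 = 1 - η * Complex.I := by
  rw [betam, one_div, ← Nat.cast_ofNat, Complex.cpow_nat_inv_pow _ two_ne_zero]

/-- The adjoint resonant eigenfunction equation: k = ∂_x(e^{β(−η)x} sech x)
satisfies k''''−4k''+6(φk')'−3η²k = −4iηβ(−η)k'. -/
theorem stmt6 (η : ℝ) :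
    ∀ x : ℝ,
      (fun k : ℝ → ℂ =>
        iteratedDeriv 4 k x - 4 * iteratedDeriv 2 k x
          + 6 * deriv (fun x' => ((2 * ((Real.cosh x')⁻¹) ^ 2 : ℝ) : ℂ) * deriv k x') x
          - 3 * (η : ℂ) ^ 2 * k x
        = (-(4 * Complex.I * (η : ℂ) * betam η)) * deriv k x)
      (fun x' : ℝ =>
        deriv
          (fun x'' : ℝ => Complex.exp (betam η * (x'' : ℂ)) * (Complex.cosh (x'' : ℂ))⁻¹) x') := by
  intro x
  have h := deriv_expSech_ode (betam η) x
  rw [betam_sq, sub_sub_cancel_left] at h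
  have hf : (fun x'' : ℝ => Complex.exp (betam η * (x'' : ℂ)) * (Complex.cosh (x'' : ℂ))⁻¹)
      = expSech (betam η) := rfl
  beta_reduce
  rw [hf]
  linear_combination h - 3 * (η : ℂ) ^ 2 * deriv (expSech (betam η)) x * Complex.I_sq
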